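/- arXiv:2512.05421 — 4 statements merged into one kernel-verified Lean document; each statement's English description precedes it below -/
import Mathlib

section
/- For s ≥ 3 and any nonzero element ⁱa of the multisign set Σˢ (with magnitude a > 0 and sign i ∈ {1,…,s}), the equation x ⊕ ⁱa = ⁰0 has exactly s−1 distinct solutions, namely x = ʲa for every sign j ∈ {1,…,s} with j ≠ i. -/
/-- Validity of a multisign pair: sign ≤ s, nonnegative magnitude,
and magnitude 0 iff sign 0. -/
def MSvalid (s : ℕ) (x : ℕ × ℝ) : Prop :=
  x.1 ≤ s ∧ 0 ≤ x.2 ∧ (x.2 = 0 ↔ x.1 = 0)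

/-- Multisign addition. -/
noncomputable def madd (x y : ℕ × ℝ) : ℕ × ℝ :=
  if x.1 = y.1 then (x.1, x.2 + y.2)
  else if y.2 < x.2 then (x.1, x.2 - y.2)
  else if x.2 < y.2 then (y.1, y.2 - x.2)
  else (0, 0)

/-- Multisign multiplication with s signs. -/
noncomputable def mmul (s : ℕ) (x y : ℕ × ℝ) : ℕ × ℝ :=
  if x.1 = 0 ∨ y.1 = 0 then (0, 0)
  else if s < x.1 + y.1 - 1 then (x.1 + y.1 - 1 - s, x.2 * y.2)
  else (x.1 + y.1 - 1, x.2 * y.2)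

theorem stmt_0 (s : ℕ) (hs : 3 ≤ s) (i : ℕ) (a : ℝ)
    (hi1 : 1 ≤ i) (his : i ≤ s) (ha : 0 < a) :
    {x : ℕ × ℝ | MSvalid s x ∧ madd x (i, a) = ((0 : ℕ), (0 : ℝ))}
      = (fun j : ℕ => ((j, a) : ℕ × ℝ)) '' {j : ℕ | 1 ≤ j ∧ j ≤ s ∧ j ≠ i} ∧
    Set.ncard {x : ℕ × ℝ | MSvalid s x ∧ madd x (i, a) = ((0 : ℕ), (0 : ℝ))} = s - 1 := by
  have hi0 : i ≠ 0 := by omega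
  have hset : {x : ℕ × ℝ | MSvalid s x ∧ madd x (i, a) = ((0 : ℕ), (0 : ℝ))}
      = (fun j : ℕ => ((j, a) : ℕ × ℝ)) '' {j : ℕ | 1 ≤ j ∧ j ≤ s ∧ j ≠ i} := by
    ext ⟨j, b⟩
    simp only [Set.mem_setOf_eq, Set.mem_image, MSvalid, madd, Prod.mk.injEq]
    constructor
    · rintro ⟨⟨hjs, hb0, hbiff⟩, heq⟩
      by_cases hji : j = i
      · simp [hji] at heq
        omega
      · simp only [hji, if_neg, ite_eq_iff] at heq
        have hba : b = a := by
          rcases lt_trichotomy b a with h | h | h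
          · simp [hji, not_lt.mpr h.le, h] at heq
            exact absurd heq.1 hi0
          · exact h
          · simp [hji, h] at heq
            have : b = 0 := by linarith [heq.2]
            linarith
        have hj0 : j ≠ 0 := by
          intro h0
          have := hbiff.mpr h0
          rw [hba] at this; linarith
        exact ⟨j, ⟨by omega, hjs, hji⟩, rfl, hba.symm⟩
    · rintro ⟨k, ⟨hk1, hks, hki⟩, hk, hb⟩
      subst hk; subst hb
      refine ⟨⟨hks, ha.le, by constructor <;> intro h <;> [linarith; omega]⟩, ?_⟩
      simp [madd, hki, lt_irrefl]
  refine ⟨hset, ?_⟩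
  rw [hset]
  have hinj : Set.InjOn (fun j : ℕ => ((j, a) : ℕ × ℝ)) {j : ℕ | 1 ≤ j ∧ j ≤ s ∧ j ≠ i} := by
    intro x _ y _ h
    simpa using congrArg Prod.fst h
  rw [Set.ncard_image_of_injOn hinj]
  have : {j : ℕ | 1 ≤ j ∧ j ≤ s ∧ j ≠ i} = ↑((Finset.Icc 1 s).erase i) := by
    ext j
    simp [Finset.mem_erase, and_comm, and_assoc, eq_comm]
  rw [this, Set.ncard_coe_finset, Finset.card_erase_of_mem (Finset.mem_Icc.mpr ⟨hi1, his⟩)]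
  simp [Nat.card_Icc]
end

section
/- Signed-associativity of multisign addition: for all ⁱa, ʲb, ᵏc ∈ Σˢ whose signs satisfy |{i,j,k}| ≤ 2 (at least two of the three signs coincide), one has (ⁱa ⊕ ʲb) ⊕ ᵏc = ⁱa ⊕ (ʲb ⊕ ᵏc). -/
set_option maxHeartbeats 2000000


theorem stmt_4 (s : ℕ) (x y z : ℕ × ℝ)
    (hx : MSvalid s x) (hy : MSvalid s y) (hz : MSvalid s z)
    (hsigns : x.1 = y.1 ∨ x.1 = z.1 ∨ y.1 = z.1) :
    madd (madd x y) z = madd x (madd y z) := by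
  obtain ⟨i, a⟩ := x; obtain ⟨j, b⟩ := y; obtain ⟨k, c⟩ := z
  obtain ⟨-, ha, ha0⟩ := hx; obtain ⟨-, hb, hb0⟩ := hy; obtain ⟨-, hc, hc0⟩ := hz
  simp only [madd] at *
  split_ifs <;> simp_all <;>
    first
      | rfl
      | (constructor <;> first | omega | linarith)
      | omega
      | linarith
end

section
/- Multiplication distributes over addition in Σˢ: for all x, y, z ∈ Σˢ, x ⊗ (y ⊕ z) = (x ⊗ y) ⊕ (x ⊗ z). -/
/-- Sign of a product of nonzero elements. -/
def msgn (s a b : ℕ) : ℕ := if s < a + b - 1 then a + b - 1 - s else a + b - 1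

lemma mmul_eq (s a b : ℕ) (p q : ℝ) (ha : a ≠ 0) (hb : b ≠ 0) :
    mmul s (a, p) (b, q) = (msgn s a b, p * q) := by
  simp only [mmul, msgn]
  rw [if_neg (by tauto)]
  split_ifs <;> rfl

lemma mmul_zero (s a : ℕ) (p : ℝ) : mmul s (a, p) (0, 0) = (0, 0) := by
  simp [mmul]

lemma msgn_ne (s a b : ℕ) (ha : a ≠ 0) (hb : b ≠ 0) : msgn s a b ≠ 0 := by
  simp only [msgn]; split_ifs <;> omega

lemma msgn_inj (s a b c : ℕ) (ha : a ≠ 0) (hb : b ≠ 0) (hc : c ≠ 0)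
    (hbs : b ≤ s) (hcs : c ≤ s) (hbc : b ≠ c) : msgn s a b ≠ msgn s a c := by
  simp only [msgn]; split_ifs <;> omega

lemma madd_same (k : ℕ) (m n : ℝ) : madd (k, m) (k, n) = (k, m + n) := by
  simp [madd]

lemma madd_gt (k l : ℕ) (m n : ℝ) (hkl : k ≠ l) (h : n < m) :
    madd (k, m) (l, n) = (k, m - n) := by
  simp [madd, hkl, h]

lemma madd_lt (k l : ℕ) (m n : ℝ) (hkl : k ≠ l) (h : m < n) :
    madd (k, m) (l, n) = (l, n - m) := by
  simp [madd, hkl, not_lt.mpr h.le, h]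

lemma madd_cancel (k l : ℕ) (m n : ℝ) (hkl : k ≠ l) (h : m = n) :
    madd (k, m) (l, n) = (0, 0) := by
  subst h
  simp [madd, hkl]

lemma madd_zero_left (k : ℕ) (m : ℝ) (hk : k ≠ 0) (hm : 0 < m) :
    madd (0, 0) (k, m) = (k, m) := by
  have := madd_lt 0 k 0 m (Ne.symm hk) hm
  simpa using this

lemma madd_zero_right (k : ℕ) (m : ℝ) (hk : k ≠ 0) (hm : 0 < m) :
    madd (k, m) (0, 0) = (k, m) := by
  have := madd_gt k 0 m 0 hk hm
  simpa using this

theorem stmt_10 (s : ℕ) (x y z : ℕ × ℝ)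
    (hx : MSvalid s x) (hy : MSvalid s y) (hz : MSvalid s z) :
    mmul s x (madd y z) = madd (mmul s x y) (mmul s x z) := by
  obtain ⟨a, p⟩ := x; obtain ⟨b, q⟩ := y; obtain ⟨c, r⟩ := z
  obtain ⟨ha1, ha2, ha3⟩ := hx
  obtain ⟨hb1, hb2, hb3⟩ := hy
  obtain ⟨hc1, hc2, hc3⟩ := hz
  simp only at ha1 ha2 ha3 hb1 hb2 hb3 hc1 hc2 hc3
  by_cases ha : a = 0
  · subst ha
    have hp0 : p = 0 := ha3.mpr rfl
    subst hp0
    simp [mmul, madd]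
  have hp : 0 < p := ha2.lt_of_ne fun h => ha (ha3.mp h.symm)
  by_cases hb : b = 0
  · subst hb
    have hq0 : q = 0 := hb3.mpr rfl
    subst hq0
    by_cases hc : c = 0
    · subst hc
      have hr0 : r = 0 := hc3.mpr rfl
      subst hr0
      simp [mmul, madd]
    · have hr : 0 < r := hc2.lt_of_ne fun h => hc (hc3.mp h.symm)
      rw [madd_zero_left c r hc hr, mmul_eq s a c p r ha hc, mmul_zero,
        madd_zero_left _ _ (msgn_ne s a c ha hc) (mul_pos hp hr)]
  have hq : 0 < q := hb2.lt_of_ne fun h => hb (hb3.mp h.symm)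
  by_cases hc : c = 0
  · subst hc
    have hr0 : r = 0 := hc3.mpr rfl
    subst hr0
    rw [madd_zero_right b q hb hq, mmul_eq s a b p q ha hb, mmul_zero,
      madd_zero_right _ _ (msgn_ne s a b ha hb) (mul_pos hp hq)]
  have hr : 0 < r := hc2.lt_of_ne fun h => hc (hc3.mp h.symm)
  rw [mmul_eq s a b p q ha hb, mmul_eq s a c p r ha hc]
  by_cases hbc : b = c
  · subst hbc
    rw [madd_same, mmul_eq s a b p (q + r) ha hb, madd_same]
    exact Prod.ext rfl (mul_add p q r)
  have hsgn := msgn_inj s a b c ha hb hc hb1 hc1 hbc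
  rcases lt_trichotomy q r with h | h | h
  · rw [madd_lt b c q r hbc h, mmul_eq s a c p (r - q) ha hc,
      madd_lt _ _ _ _ hsgn (mul_lt_mul_of_pos_left h hp)]
    exact Prod.ext rfl (mul_sub p r q)
  · rw [madd_cancel b c q r hbc h, mmul_zero, madd_cancel _ _ _ _ hsgn (by rw [h])]
  · rw [madd_gt b c q r hbc h, mmul_eq s a b p (q - r) ha hb,
      madd_gt _ _ _ _ hsgn (mul_lt_mul_of_pos_left h hp)]
    exact Prod.ext rfl (mul_sub p q r)
end

section
/- For s ≥ 3, the mixed equation x ⊗ ¹2 ⊕ ¹2 = ⁰0 in Σˢ has exactly s−1 distinct solutions, namely x = ʲ1 for every sign j ∈ {2,…,s}. -/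
theorem stmt_13 (s : ℕ) (hs : 3 ≤ s) :
    {x : ℕ × ℝ | MSvalid s x ∧
        madd (mmul s x ((1 : ℕ), (2 : ℝ))) ((1 : ℕ), (2 : ℝ)) = ((0 : ℕ), (0 : ℝ))}
      = (fun j : ℕ => ((j, (1 : ℝ)) : ℕ × ℝ)) '' {j : ℕ | 2 ≤ j ∧ j ≤ s} ∧
    Set.ncard {x : ℕ × ℝ | MSvalid s x ∧
        madd (mmul s x ((1 : ℕ), (2 : ℝ))) ((1 : ℕ), (2 : ℝ)) = ((0 : ℕ), (0 : ℝ))}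
      = s - 1 := by
  have hset : {x : ℕ × ℝ | MSvalid s x ∧
        madd (mmul s x ((1 : ℕ), (2 : ℝ))) ((1 : ℕ), (2 : ℝ)) = ((0 : ℕ), (0 : ℝ))}
      = (fun j : ℕ => ((j, (1 : ℝ)) : ℕ × ℝ)) '' {j : ℕ | 2 ≤ j ∧ j ≤ s} := by
    ext ⟨j, a⟩
    simp only [Set.mem_setOf_eq, Set.mem_image, MSvalid, madd, mmul]
    constructor
    · rintro ⟨⟨hjs, ha0, hiff⟩, heq⟩
      by_cases hj0 : j = 0
      · simp [hj0] at heq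
        split_ifs at heq with h1 h2 <;> simp_all <;> linarith
      · rw [if_neg (by omega : ¬ (j = 0 ∨ (1:ℕ) = 0)),
          if_neg (by omega : ¬ s < j + 1 - 1)] at heq
        simp only [show j + 1 - 1 = j by omega] at heq
        rw [Prod.ext_iff] at heq
        simp only at heq
        split_ifs at heq with h1 h2 h3
        · exact absurd heq.1 (by omega)
        · exact absurd heq.1 hj0
        · exact heq.1.elim
        · refine ⟨j, ⟨by omega, hjs⟩, ?_⟩
          have : a = 1 := by push_neg at h2 h3; linarith
          simp [this]
    · rintro ⟨j, ⟨h2, hjs⟩, heq⟩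
      injection heq with e1 e2
      subst e1; subst e2
      refine ⟨⟨hjs, by norm_num, by constructor <;> intro h <;> [norm_num at h; omega]⟩, ?_⟩
      rw [if_neg (by omega : ¬ (j = 0 ∨ (1:ℕ) = 0)), if_neg (by omega : ¬ s < j + 1 - 1)]
      simp only [show j + 1 - 1 = j by omega]
      norm_num
      omega
  refine ⟨hset, ?_⟩
  rw [hset, Set.ncard_image_of_injective _
    (fun a b h => congrArg Prod.fst h)]
  have : {j : ℕ | 2 ≤ j ∧ j ≤ s} = ↑(Finset.Icc 2 s) := by ext j; simp
  rw [this, Set.ncard_coe_finset, Nat.card_Icc]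
  omega
end
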